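/- arXiv:2501.04342 — 4 statements merged into one kernel-verified Lean document; each statement's English description precedes it below -/
import Mathlib

section
/- Let E be a set and ℱ a collection of finite nonempty subsets of E satisfying the strong circuit elimination axiom: for all F₀, F₁ ∈ ℱ, e ∈ F₀ ∩ F₁, and f ∈ F₀ △ F₁, there is F ∈ ℱ with f ∈ F ⊆ (F₀ ∪ F₁) \ {e}. Then the set 𝒞 of ⊆-minimal elements of ℱ is the set of circuits of a (finitary) matroid on E, and every F ∈ ℱ is a union of elements of 𝒞. -/
open Set

variable {α : Type*}

/-- `C` is a circuit of the matroid `M`: a minimal dependent subset of the ground set. -/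
def MCircuit (M : Matroid α) (C : Set α) : Prop :=
  C ⊆ M.E ∧ ¬ M.Indep C ∧ ∀ D, D ⊂ C → M.Indep D

/-!
Call a set free if it contains no member of `ℱ`; the independent sets are the free subsets of
`E`. For augmentation, take `I, J` free with `|I| < |J|` and, among the free `K ⊆ I ∪ J` with
`|K| > |I|`, one with `|I \ K|` least. If `I ⊄ K`, pick `x ∈ I \ K`. By strong elimination
`insert x K` contains at most one member `C` of `ℱ`, so exchanging `x` for some
`f ∈ (K \ I) ∩ C` keeps `K` free and shrinks `|I \ K|`. Hence `I ⊆ K`, and any `e ∈ K \ I`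
augments `I`. Strong elimination also shows that a member of `ℱ` minimal among those through
`f` is minimal outright, which gives both the circuits and the scrawl property.
-/

def StrongCircuitElim (ℱ : Set (Set α)) : Prop :=
  ∀ F₀ ∈ ℱ, ∀ F₁ ∈ ℱ, ∀ e ∈ F₀ ∩ F₁, ∀ f ∈ (F₀ \ F₁) ∪ (F₁ \ F₀),
    ∃ F ∈ ℱ, f ∈ F ∧ F ⊆ (F₀ ∪ F₁) \ {e}

def IsFree (ℱ : Set (Set α)) (I : Set α) : Prop :=
  ∀ F ∈ ℱ, ¬ F ⊆ I

variable {ℱ : Set (Set α)} {C D I J K : Set α} {x f : α}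

theorem IsFree.subset (hJ : IsFree ℱ J) (hIJ : I ⊆ J) : IsFree ℱ I :=
  fun F hF hFI ↦ hJ F hF (hFI.trans hIJ)

theorem isFree_empty (hne : ∀ F ∈ ℱ, F.Nonempty) : IsFree ℱ ∅ :=
  fun F hF hF0 ↦ (hne F hF).ne_empty (subset_empty_iff.1 hF0)

theorem isFree_of_forall_finite (hfin : ∀ F ∈ ℱ, F.Finite)
    (h : ∀ J ⊆ I, J.Finite → IsFree ℱ J) : IsFree ℱ I :=
  fun F hF hFI ↦ h F hFI (hfin F hF) F hF subset_rfl

namespace StrongCircuitElim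

theorem eq_of_subset_insert (hℱ : StrongCircuitElim ℱ) (hK : IsFree ℱ K) (hC : C ∈ ℱ)
    (hD : D ∈ ℱ) (hCK : C ⊆ insert x K) (hDK : D ⊆ insert x K) : C = D := by
  have hx : ∀ ⦃G⦄, G ∈ ℱ → G ⊆ insert x K → x ∈ G := fun G hG hGK ↦
    by_contra fun hxG ↦ hK G hG fun y hy ↦ (hGK hy).resolve_left (ne_of_mem_of_not_mem hy hxG)
  suffices key : ∀ ⦃C D⦄, C ∈ ℱ → D ∈ ℱ → C ⊆ insert x K → D ⊆ insert x K → C ⊆ D from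
    (key hC hD hCK hDK).antisymm (key hD hC hDK hCK)
  intro C D hC hD hCK hDK g hgC
  by_contra hgD
  obtain ⟨G, hG, -, hGCD⟩ := hℱ C hC D hD x ⟨hx hC hCK, hx hD hDK⟩ g (.inl ⟨hgC, hgD⟩)
  refine hK G hG fun y hy ↦ ?_
  obtain ⟨hyCD, hyx⟩ := hGCD hy
  exact (union_subset hCK hDK hyCD).resolve_left hyx

theorem exists_isFree_exchange (hℱ : StrongCircuitElim ℱ) (hI : IsFree ℱ I) (hK : IsFree ℱ K)
    (hx : x ∈ I) (hKI : (K \ I).Nonempty) : ∃ f ∈ K \ I, IsFree ℱ (insert x K \ {f}) := by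
  by_contra! hdep
  simp only [IsFree, not_forall, not_not] at hdep
  obtain ⟨f₀, hf₀⟩ := hKI
  obtain ⟨C, hC, hCsub⟩ := hdep f₀ hf₀
  obtain ⟨g, hgC, hgI⟩ : ∃ g ∈ C, g ∉ I := not_subset.1 fun hCI ↦ hI C hC hCI
  have hgK : g ∈ K := ((hCsub hgC).1).resolve_left (ne_of_mem_of_not_mem hx hgI).symm
  obtain ⟨D, hD, hDsub⟩ := hdep g ⟨hgK, hgI⟩
  have hCD :=
    hℱ.eq_of_subset_insert hK hC hD (hCsub.trans sdiff_subset) (hDsub.trans sdiff_subset)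
  exact (hDsub (hCD ▸ hgC)).2 rfl

theorem exists_isFree_insert_of_ncard_lt (hℱ : StrongCircuitElim ℱ) (hI : IsFree ℱ I)
    (hIfin : I.Finite) (hJ : IsFree ℱ J) (hJfin : J.Finite) (hIJ : I.ncard < J.ncard) :
    ∃ e ∈ J, e ∉ I ∧ IsFree ℱ (insert e I) := by
  set S := {K | K ⊆ I ∪ J ∧ IsFree ℱ K ∧ I.ncard < K.ncard}
  have hSfin : S.Finite := (hIfin.union hJfin).finite_subsets.subset fun K hK ↦ hK.1
  obtain ⟨K, ⟨hKIJ, hK, hIK⟩, hKmin⟩ :=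
    S.exists_min_image (fun K ↦ (I \ K).ncard) hSfin ⟨J, subset_union_right, hJ, hIJ⟩
  have hKfin : K.Finite := (hIfin.union hJfin).subset hKIJ
  obtain ⟨e, heK, heI⟩ := exists_mem_notMem_of_ncard_lt_ncard hIK hIfin
  by_cases hIsubK : I ⊆ K
  · exact ⟨e, (hKIJ heK).resolve_left heI, heI, hK.subset (insert_subset heK hIsubK)⟩
  obtain ⟨x, hxI, hxK⟩ := not_subset.1 hIsubK
  obtain ⟨f, ⟨hfK, hfI⟩, hK'⟩ := hℱ.exists_isFree_exchange hI hK hxI ⟨e, heK, heI⟩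
  have hK'S : insert x K \ {f} ∈ S :=
    ⟨sdiff_subset.trans (insert_subset (.inl hxI) hKIJ), hK', by rwa [ncard_exchange' hxK hfK]⟩
  have hlt : (I \ (insert x K \ {f})).ncard < (I \ K).ncard := by
    refine ncard_lt_ncard (ssubset_of_subset_of_ssubset ?_
      (sdiff_singleton_ssubset.2 ⟨hxI, hxK⟩)) hIfin.sdiff
    intro y hy
    simp only [mem_sdiff, mem_insert_iff, mem_singleton_iff] at hy ⊢
    grind
  exact absurd hlt (hKmin _ hK'S).not_gt

theorem minimal_of_minimal_and_mem (hℱ : StrongCircuitElim ℱ) (hne : ∀ F ∈ ℱ, F.Nonempty)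
    (hC : Minimal (fun G ↦ G ∈ ℱ ∧ f ∈ G) C) : Minimal (· ∈ ℱ) C := by
  refine minimal_subset_iff.2 ⟨hC.prop.1, fun D hD hDC ↦ ?_⟩
  by_cases hfD : f ∈ D
  · exact hC.eq_of_superset ⟨hD, hfD⟩ hDC
  obtain ⟨e, heD⟩ := hne D hD
  obtain ⟨G, hG, hfG, hGsub⟩ := hℱ C hC.prop.1 D hD e ⟨hDC heD, heD⟩ f (.inl ⟨hC.prop.2, hfD⟩)
  have hGC : G ⊂ C := by
    refine ssubset_of_subset_of_ssubset (fun y hy ↦ ?_) (sdiff_singleton_ssubset.2 (hDC heD))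
    obtain ⟨hy, hye⟩ := hGsub hy
    exact ⟨hy.elim id (@hDC y), hye⟩
  exact absurd hGC (hC.not_ssubset ⟨hG, hfG⟩)

theorem exists_minimal_subset (hℱ : StrongCircuitElim ℱ) (hfin : ∀ F ∈ ℱ, F.Finite)
    (hne : ∀ F ∈ ℱ, F.Nonempty) {F : Set α} (hF : F ∈ ℱ) (hf : f ∈ F) :
    ∃ C, Minimal (· ∈ ℱ) C ∧ f ∈ C ∧ C ⊆ F := by
  set S := {G | (G ∈ ℱ ∧ f ∈ G) ∧ G ⊆ F}
  have hSfin : S.Finite := (hfin F hF).finite_subsets.subset fun G hG ↦ hG.2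
  obtain ⟨C, hCF, hC⟩ := hSfin.exists_le_minimal (a := F) ⟨⟨hF, hf⟩, subset_rfl⟩
  have hC' : Minimal (fun G ↦ G ∈ ℱ ∧ f ∈ G) C :=
    ⟨hC.prop.1, fun G hG hGC ↦ hC.2 ⟨hG, hGC.trans hCF⟩ hGC⟩
  exact ⟨C, hℱ.minimal_of_minimal_and_mem hne hC', hC.prop.1.2, hCF⟩

end StrongCircuitElim

def freeMatroid (E : Set α) (ℱ : Set (Set α)) (hfin : ∀ F ∈ ℱ, F.Finite)
    (hne : ∀ F ∈ ℱ, F.Nonempty) (hℱ : StrongCircuitElim ℱ) : Matroid α :=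
  (IndepMatroid.ofFinitaryCardAugment E (fun I ↦ I ⊆ E ∧ IsFree ℱ I)
    ⟨empty_subset E, isFree_empty hne⟩
    (fun _ _ hJ hIJ ↦ ⟨hIJ.trans hJ.1, hJ.2.subset hIJ⟩)
    (fun _ _ hI hIfin hJ hJfin hIJ ↦
      let ⟨e, heJ, heI, he⟩ := hℱ.exists_isFree_insert_of_ncard_lt hI.2 hIfin hJ.2 hJfin hIJ
      ⟨e, heJ, heI, insert_subset (hJ.1 heJ) hI.1, he⟩)
    (fun _ h ↦ ⟨fun x hx ↦ (h {x} (singleton_subset_iff.2 hx) (finite_singleton x)).1 rfl,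
      isFree_of_forall_finite hfin fun J hJ hJfin ↦ (h J hJ hJfin).2⟩)
    (fun _ hI ↦ hI.1)).matroid

section freeMatroid

variable {E : Set α} {hfin : ∀ F ∈ ℱ, F.Finite} {hne : ∀ F ∈ ℱ, F.Nonempty}
  {hℱ : StrongCircuitElim ℱ}

@[simp] theorem freeMatroid_ground : (freeMatroid E ℱ hfin hne hℱ).E = E := rfl

@[simp] theorem freeMatroid_indep_iff :
    (freeMatroid E ℱ hfin hne hℱ).Indep I ↔ I ⊆ E ∧ IsFree ℱ I := by
  simp [freeMatroid]

instance : (freeMatroid E ℱ hfin hne hℱ).Finitary := by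
  unfold freeMatroid; infer_instance

theorem mcircuit_freeMatroid_iff (hsub : ∀ F ∈ ℱ, F ⊆ E) :
    MCircuit (freeMatroid E ℱ hfin hne hℱ) C ↔ Minimal (· ∈ ℱ) C := by
  simp only [MCircuit, freeMatroid_ground, freeMatroid_indep_iff, IsFree, minimal_subset_iff]
  constructor
  · rintro ⟨hCE, hCdep, hCmin⟩
    have hmin : ∀ F ∈ ℱ, F ⊆ C → C = F := fun F hF hFC ↦
      by_contra fun hCF ↦ (hCmin F (hFC.ssubset_of_ne (Ne.symm hCF))).2 F hF subset_rfl
    obtain ⟨F, hF, hFC⟩ : ∃ F ∈ ℱ, F ⊆ C := by simpa [hCE] using hCdep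
    exact ⟨hmin F hF hFC ▸ hF, fun F hF hFC ↦ hmin F hF hFC⟩
  · rintro ⟨hC, hCmin⟩
    refine ⟨hsub C hC, fun h ↦ h.2 C hC subset_rfl, fun D hDC ↦
      ⟨hDC.subset.trans (hsub C hC), fun F hF hFD ↦ ?_⟩⟩
    exact hDC.not_subset (hCmin hF (hFD.trans hDC.subset) ▸ hFD)

end freeMatroid

/-- If `ℱ` is a collection of finite nonempty subsets of `E` satisfying the strong circuit
elimination axiom, then the ⊆-minimal elements of `ℱ` are the circuits of a finitary
matroid on `E`, and every member of `ℱ` is a union of such circuits (a scrawl). -/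
theorem stmt3 (E : Set α) (ℱ : Set (Set α))
    (hfin : ∀ F ∈ ℱ, F.Finite) (hne : ∀ F ∈ ℱ, F.Nonempty) (hsub : ∀ F ∈ ℱ, F ⊆ E)
    (helim : ∀ F₀ ∈ ℱ, ∀ F₁ ∈ ℱ, ∀ e ∈ F₀ ∩ F₁, ∀ f ∈ (F₀ \ F₁) ∪ (F₁ \ F₀),
      ∃ F ∈ ℱ, f ∈ F ∧ F ⊆ (F₀ ∪ F₁) \ {e}) :
    ∃ M : Matroid α, M.E = E ∧ M.Finitary ∧
      (∀ C, MCircuit M C ↔ (C ∈ ℱ ∧ ∀ F ∈ ℱ, F ⊆ C → F = C)) ∧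
      (∀ F ∈ ℱ, ∀ f ∈ F, ∃ C, MCircuit M C ∧ f ∈ C ∧ C ⊆ F) := by
  have hℱ : StrongCircuitElim ℱ := helim
  refine ⟨freeMatroid E ℱ hfin hne hℱ, rfl, inferInstance, fun C ↦ ?_, fun F hF f hf ↦ ?_⟩
  · rw [mcircuit_freeMatroid_iff hsub, minimal_subset_iff]
    simp only [eq_comm (a := C)]
  · obtain ⟨C, hC, hfC, hCF⟩ := hℱ.exists_minimal_subset hfin hne hF hf
    exact ⟨C, (mcircuit_freeMatroid_iff hsub).2 hC, hfC, hCF⟩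
end

section
/- Let M be a matroid, C₀ and C₁ circuits of M, f ∈ C₀ ∩ C₁, e₀ ∈ C₀ \ C₁, e₁ ∈ C₁ \ C₀, and suppose (C₀ ∪ C₁) \ {e₀, e₁} is independent in M. Then there is a unique circuit C of M with C ⊆ (C₀ ∪ C₁) \ {f}, and moreover C₀ △ C₁ ⊆ C. -/
open Set

variable {α : Type*}

/-!
Let `U = C₀ ∪ C₁`. A circuit inside `insert e I` with `I` independent is the fundamental circuit
of `e` over `I`. Applied to `U \ {e₀} = insert e₁ (U \ {e₀, e₁})`, whose only circuit is `C₁`,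
this shows that `U \ {e₀, y}` is independent for every `y ∈ C₁`; exchanging the roles of the
two circuits gives `U \ {x, f}` independent for every `x ∈ C₀ △ C₁`, so every circuit inside
`U \ {f}` contains `C₀ △ C₁`. Since `U \ {f} ⊆ insert e₀ (U \ {e₀, f})`, it holds at most one
circuit, and at least one, since otherwise `C₀` and `C₁` would both be the fundamental circuit of
`f` over `U \ {f}`.
-/

theorem mcircuit_iff_isCircuit {M : Matroid α} {C : Set α} : MCircuit M C ↔ M.IsCircuit C := by
  rw [Matroid.isCircuit_iff_forall_ssubset, Matroid.Dep, MCircuit]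
  exact ⟨fun ⟨hE, hC, hmin⟩ ↦ ⟨⟨hC, hE⟩, fun D hD ↦ hmin D hD⟩,
    fun ⟨⟨hC, hE⟩, hmin⟩ ↦ ⟨hE, hC, fun D hD ↦ hmin hD⟩⟩

namespace Matroid

variable {M : Matroid α} {C C' I W U : Set α} {e y e₀ e₁ : α}

theorem IsCircuit.eq_of_subset_insert_of_indep (hC : M.IsCircuit C) (hC' : M.IsCircuit C')
    (hI : M.Indep I) (hCs : C ⊆ insert e I) (hC's : C' ⊆ insert e I) : C = C' :=
  (hC.eq_fundCircuit_of_subset hI hCs).trans (hC'.eq_fundCircuit_of_subset hI hC's).symm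

theorem IsCircuit.indep_sdiff_singleton_of_subset (hC : M.IsCircuit C) (hCW : C ⊆ W)
    (hW : M.Indep (W \ {e})) (hy : y ∈ C) : M.Indep (W \ {y}) := by
  have hWs : W ⊆ insert e (W \ {e}) := subset_insert_sdiff_singleton e W
  have heC : e ∈ C := by
    by_contra heC
    exact hC.not_indep (hW.subset (subset_sdiff_singleton hCW heC))
  have hWE : W ⊆ M.E := hWs.trans (insert_subset (hC.subset_ground heC) hW.subset_ground)
  by_contra hdep
  have hWy : M.Dep (W \ {y}) := ⟨hdep, sdiff_subset.trans hWE⟩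
  obtain ⟨C', hC'W, hC'⟩ := hWy.exists_isCircuit_subset
  have hC'C : C' = C :=
    hC'.eq_of_subset_insert_of_indep hC hW (hC'W.trans (sdiff_subset.trans hWs)) (hCW.trans hWs)
  exact (hC'W (hC'C ▸ hy)).2 rfl

theorem IsCircuit.indep_sdiff_pair_of_mem (hC : M.IsCircuit C) (hCU : C ⊆ U) (he₀ : e₀ ∉ C)
    (hI : M.Indep (U \ {e₀, e₁})) (hy : y ∈ C) : M.Indep (U \ {e₀, y}) := by
  have sdiff_pair (a b : α) : (U \ {a}) \ {b} = U \ {a, b} := by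
    rw [sdiff_sdiff, union_singleton, pair_comm]
  rw [← sdiff_pair] at hI ⊢
  exact hC.indep_sdiff_singleton_of_subset (subset_sdiff_singleton hCU he₀) hI hy

end Matroid

/-- Given circuits `C₀, C₁`, `f ∈ C₀ ∩ C₁`, `e₀ ∈ C₀ \ C₁`, `e₁ ∈ C₁ \ C₀` with
`(C₀ ∪ C₁) \ {e₀, e₁}` independent, there is a unique circuit `C ⊆ (C₀ ∪ C₁) \ {f}`,
and moreover `C₀ △ C₁ ⊆ C`. -/
theorem stmt4 (M : Matroid α) (C₀ C₁ : Set α) (hC₀ : MCircuit M C₀) (hC₁ : MCircuit M C₁)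
    (f : α) (hf : f ∈ C₀ ∩ C₁) (e₀ : α) (he₀ : e₀ ∈ C₀ \ C₁) (e₁ : α) (he₁ : e₁ ∈ C₁ \ C₀)
    (hI : M.Indep ((C₀ ∪ C₁) \ {e₀, e₁})) :
    (∃! C, MCircuit M C ∧ C ⊆ (C₀ ∪ C₁) \ {f}) ∧
      ∀ C, MCircuit M C → C ⊆ (C₀ ∪ C₁) \ {f} → (C₀ \ C₁) ∪ (C₁ \ C₀) ⊆ C := by
  simp only [mcircuit_iff_isCircuit] at hC₀ hC₁ ⊢
  set U := C₀ ∪ C₁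
  have hUf : U \ {f} ⊆ insert e₀ (U \ {e₀, f}) := by
    intro x hx
    by_cases hx₀ : x = e₀
    · exact .inl hx₀
    · exact .inr ⟨hx.1, by simp [hx₀, hx.2]⟩
  have hIf : M.Indep (U \ {e₀, f}) := hC₁.indep_sdiff_pair_of_mem subset_union_right he₀.2 hI hf.2
  have hIsymm : ∀ x ∈ (C₀ \ C₁) ∪ (C₁ \ C₀), M.Indep (U \ {x, f}) := by
    rintro x (hx | hx)
    · have hIx := hC₀.indep_sdiff_pair_of_mem subset_union_left he₁.2
        (pair_comm e₀ e₁ ▸ hI) hx.1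
      exact hC₁.indep_sdiff_pair_of_mem subset_union_right hx.2 (pair_comm e₁ x ▸ hIx) hf.2
    · have hIx := hC₁.indep_sdiff_pair_of_mem subset_union_right he₀.2 hI hx.1
      exact hC₀.indep_sdiff_pair_of_mem subset_union_left hx.2 (pair_comm e₀ x ▸ hIx) hf.1
  have hdep : M.Dep (U \ {f}) := by
    refine ⟨fun hUfi ↦ he₀.2 ?_,
      sdiff_subset.trans (union_subset hC₀.subset_ground hC₁.subset_ground)⟩
    have hUs : U ⊆ insert f (U \ {f}) := subset_insert_sdiff_singleton f U
    exact hC₀.eq_of_subset_insert_of_indep hC₁ hUfi (subset_union_left.trans hUs)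
      (subset_union_right.trans hUs) ▸ he₀.1
  obtain ⟨C, hCU, hC⟩ := hdep.exists_isCircuit_subset
  refine ⟨⟨C, ⟨hC, hCU⟩, fun C' ⟨hC', hC'U⟩ ↦
    hC'.eq_of_subset_insert_of_indep hC hIf (hC'U.trans hUf) (hCU.trans hUf)⟩, ?_⟩
  intro C' hC' hC'U x hx
  by_contra hxC'
  refine hC'.not_indep ((hIsymm x hx).subset fun y hy ↦ ⟨(hC'U hy).1, ?_⟩)
  rintro (rfl | rfl)
  exacts [hxC' hy, (hC'U hy).2 rfl]
end

section
/- Let M be a matroid, B a base of M, e₀, …, e_n pairwise distinct elements of E \ B, and F ⊆ B with |F| ≤ n. Then there exists i* ≤ n and a circuit C of M with e_{i*} ∈ C and C ⊆ (⋃_{i*≤i≤n} C_M(e_i, B)) \ F. -/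
open Set

variable {α : Type*}

/-- `C` is the fundamental circuit of `e` with respect to `B`. -/
def FundCircuit (M : Matroid α) (e : α) (B C : Set α) : Prop :=
  MCircuit M C ∧ e ∈ C ∧ C ⊆ insert e B

/-!
Induction on `n`. If `C(e_n, B)` misses `F`, it is the required circuit. Otherwise exchange some
`f ∈ F ∩ C(e_n, B)` for `e_n`: the new base `B'` avoids `f` and
`C(e_i, B') ⊆ C(e_i, B) ∪ C(e_n, B)`, so the induction hypothesis for `e_0, …, e_{n-1}`, `B'`
and `F \ {f}` gives the circuit.
-/

section

variable {M : Matroid α} {B C F I L : Set α} {e f x : α}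

lemma mCircuit_iff_isCircuit : MCircuit M C ↔ M.IsCircuit C := by
  rw [Matroid.isCircuit_iff_forall_ssubset, Matroid.Dep, MCircuit]
  tauto

lemma FundCircuit.eq_fundCircuit (h : FundCircuit M e I C) (hI : M.Indep I) :
    C = M.fundCircuit e I :=
  (mCircuit_iff_isCircuit.1 h.1).eq_fundCircuit_of_subset hI h.2.2

namespace Matroid

lemma fundCircuit_subset_insert_of_mem_closure (hLI : L ⊆ I) (hx : x ∈ M.closure L) :
    M.fundCircuit x I ⊆ insert x L := by
  rw [fundCircuit_eq_sInter (M.closure_subset_closure hLI hx)]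
  exact insert_subset_insert (sInter_subset_of_mem ⟨hLI, hx⟩)

lemma IsBase.exchange_isBase_of_mem_fundCircuit (hB : M.IsBase B) (he : e ∈ M.E \ B)
    (hf : f ∈ M.fundCircuit e B) (hfB : f ∈ B) : M.IsBase (insert e B \ {f}) :=
  hB.exchange_isBase_of_indep' hfB he.2 <|
    (hB.indep.mem_fundCircuit_iff (hB.closure_eq ▸ he.1) he.2).1 hf

lemma IsBase.fundCircuit_exchange_subset (hB : M.IsBase B) (he : e ∈ M.E \ B)
    (hf : f ∈ M.fundCircuit e B) (hx : x ∈ M.E \ B) (hxe : x ≠ e) :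
    M.fundCircuit x (insert e B \ {f}) ⊆ M.fundCircuit x B ∪ M.fundCircuit e B := by
  set L := (M.fundCircuit x B ∪ M.fundCircuit e B) \ {x, f}
  have hLB' : L ⊆ insert e B \ {f} := by
    rintro y ⟨hy | hy, hyxf⟩ <;> simp only [mem_insert_iff, mem_singleton_iff, not_or] at hyxf
    · obtain rfl | hyB := M.fundCircuit_subset_insert x B hy
      · exact absurd rfl hyxf.1
      · exact ⟨mem_insert_of_mem _ hyB, hyxf.2⟩
    · exact ⟨M.fundCircuit_subset_insert e B hy, hyxf.2⟩
  have hxCe : x ∉ M.fundCircuit e B := fun h ↦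
    (M.fundCircuit_subset_insert e B h).elim hxe hx.2
  have hfL : f ∈ M.closure L := by
    refine M.closure_subset_closure ?_
      ((hB.fundCircuit_isCircuit he.1 he.2).mem_closure_sdiff_singleton_of_mem hf)
    rintro y ⟨hy, hyf⟩
    refine ⟨Or.inr hy, ?_⟩
    rintro (rfl | rfl)
    exacts [hxCe hy, hyf rfl]
  have hxL : x ∈ M.closure L := by
    rw [← closure_insert_eq_of_mem_closure hfL]
    refine M.closure_subset_closure ?_ ((hB.fundCircuit_isCircuit hx.1 hx.2)
      |>.mem_closure_sdiff_singleton_of_mem (M.mem_fundCircuit x B))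
    rintro y ⟨hy, hyx⟩
    by_cases hyf : y = f
    · exact hyf ▸ mem_insert f L
    · exact mem_insert_of_mem _ ⟨Or.inl hy, by simp_all⟩
  refine (fundCircuit_subset_insert_of_mem_closure hLB' hxL).trans ?_
  exact insert_subset (Or.inl (M.mem_fundCircuit x B)) sdiff_subset

lemma IsBase.exists_isCircuit_of_disjoint_fundCircuit {ι : Type*} [Preorder ι] {e : ι → α}
    {i : ι} (hB : M.IsBase B) (he : e i ∈ M.E \ B)
    (hdisj : Disjoint (M.fundCircuit (e i) B) F) :
    ∃ C, M.IsCircuit C ∧ e i ∈ C ∧ C ⊆ (⋃ j ∈ {j | i ≤ j}, M.fundCircuit (e j) B) \ F :=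
  ⟨_, hB.fundCircuit_isCircuit he.1 he.2, M.mem_fundCircuit _ _,
    subset_sdiff.2 ⟨subset_biUnion_of_mem (u := fun j ↦ M.fundCircuit (e j) B) le_rfl, hdisj⟩⟩

theorem IsBase.exists_isCircuit_subset_biUnion_fundCircuit_sdiff (hB : M.IsBase B) {n : ℕ}
    {e : Fin (n + 1) → α} (hinj : e.Injective) (he : ∀ i, e i ∈ M.E \ B) (hFB : F ⊆ B)
    (hFfin : F.Finite) (hFcard : F.ncard ≤ n) :
    ∃ i' : Fin (n + 1), ∃ C, M.IsCircuit C ∧ e i' ∈ C ∧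
      C ⊆ (⋃ i ∈ {i : Fin (n + 1) | i' ≤ i}, M.fundCircuit (e i) B) \ F := by
  induction n generalizing B F with
  | zero =>
    obtain rfl : F = ∅ := (ncard_eq_zero hFfin).1 (Nat.le_zero.1 hFcard)
    exact ⟨0, hB.exists_isCircuit_of_disjoint_fundCircuit (he 0) (disjoint_empty _)⟩
  | succ n ih =>
    set l := Fin.last (n + 1)
    obtain hdisj | ⟨f, hfC, hfF⟩ := disjoint_or_nonempty_inter (M.fundCircuit (e l) B) F
    · exact ⟨l, hB.exists_isCircuit_of_disjoint_fundCircuit (he l) hdisj⟩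
    have hfB : f ∈ B := hFB hfF
    set B' := insert (e l) B \ {f}
    have hne : ∀ i : Fin (n + 1), e i.castSucc ≠ e l := fun i h ↦
      (Fin.castSucc_lt_last i).ne (hinj h)
    have he' : ∀ i : Fin (n + 1), e i.castSucc ∈ M.E \ B' := fun i ↦
      ⟨(he _).1, fun h ↦ (h.1.elim (hne i) (he _).2)⟩
    have hF' : F \ {f} ⊆ B' := fun x hx ↦ ⟨mem_insert_of_mem _ (hFB hx.1), hx.2⟩
    have hcard' : (F \ {f}).ncard ≤ n := by
      have := ncard_sdiff_singleton_lt_of_mem hfF hFfin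
      omega
    obtain ⟨i', C, hC, heC, hCsub⟩ := ih (hB.exchange_isBase_of_mem_fundCircuit (he l) hfC hfB)
      (hinj.comp (Fin.castSucc_injective _)) he' hF' hFfin.sdiff hcard'
    have hstep : ∀ i : Fin (n + 1), M.fundCircuit (e i.castSucc) B' \ (F \ {f}) ⊆
        (M.fundCircuit (e i.castSucc) B ∪ M.fundCircuit (e l) B) \ F := by
      rintro i x ⟨hx, hxF⟩
      have hxf : x ≠ f := by
        rintro rfl
        obtain h | h := M.fundCircuit_subset_insert _ _ hx
        · exact (he _).2 (h ▸ hfB)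
        · exact h.2 rfl
      exact ⟨hB.fundCircuit_exchange_subset (he l) hfC (he _) (hne i) hx, fun h ↦ hxF ⟨h, hxf⟩⟩
    refine ⟨i'.castSucc, C, hC, heC, fun x hxC ↦ ?_⟩
    obtain ⟨hxU, hxF⟩ := hCsub hxC
    obtain ⟨i, hi, hx⟩ := mem_iUnion₂.1 hxU
    obtain ⟨hx | hx, hxF⟩ := hstep i ⟨hx, hxF⟩
    · exact ⟨mem_biUnion (Fin.castSucc_le_castSucc_iff.2 hi) hx, hxF⟩
    · exact ⟨mem_biUnion (Fin.le_last _) hx, hxF⟩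

end Matroid

end

/-- For pairwise distinct `e₀,…,e_n ∈ E \ B` and `F ⊆ B` with `|F| ≤ n`, there are `i* ≤ n`
and a circuit `C` with `e_{i*} ∈ C ⊆ (⋃_{i*≤i≤n} C_M(e_i,B)) \ F`. -/
theorem stmt6 (M : Matroid α) (B : Set α) (hB : M.IsBase B) (n : ℕ)
    (e : Fin (n + 1) → α) (hinj : Function.Injective e) (he : ∀ i, e i ∈ M.E \ B)
    (Cf : Fin (n + 1) → Set α) (hCf : ∀ i, FundCircuit M (e i) B (Cf i))
    (F : Set α) (hF : F ⊆ B) (hFfin : F.Finite) (hFcard : F.ncard ≤ n) :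
    ∃ i' : Fin (n + 1), ∃ C, MCircuit M C ∧ e i' ∈ C ∧
      C ⊆ (⋃ i ∈ {i : Fin (n + 1) | i' ≤ i}, Cf i) \ F := by
  obtain rfl : Cf = fun i ↦ M.fundCircuit (e i) B :=
    funext fun i ↦ (hCf i).eq_fundCircuit hB.indep
  obtain ⟨i', C, hC, heC, hCsub⟩ :=
    hB.exists_isCircuit_subset_biUnion_fundCircuit_sdiff hinj he hF hFfin hFcard
  exact ⟨i', C, mCircuit_iff_isCircuit.2 hC, heC, hCsub⟩
end

section
/- Let M and N be matroids on a common ground set E, let A ⊆ E, and let H be an (M \ A, N/A)-hindrance, i.e., H is independent but not spanning in (N/A).span_{M\A}(H). Then H is also an (M,N)-hindrance, i.e., H is independent but not spanning in N.span_M(H). -/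
open Set Matroid

variable {α : Type*}

/-- The deletion `M \ A`: the restriction of `M` to `M.E \ A`. -/
def mdelete (M : Matroid α) (A : Set α) : Matroid α := M ↾ (M.E \ A)

/-- The contraction `M / A`, defined via duality. -/
def mcontract (M : Matroid α) (A : Set α) : Matroid α := (mdelete M✶ A)✶

/-- `N.X := N / (N.E \ X)`: contraction of the complement of `X`. -/
def mdot (N : Matroid α) (X : Set α) : Matroid α := mcontract N (N.E \ X)

/-- `H` is an `(M,N)`-hindrance: `H` is independent but not spanning
in `N.span_M(H)`. -/
def Hindrance (M N : Matroid α) (H : Set α) : Prop :=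
  (mdot N (M.closure H)).Indep H ∧ ¬ (mdot N (M.closure H)).Spanning H

/-- The rank of a matroid: the (common) cardinality of its bases. -/
noncomputable def mrank (M : Matroid α) : Cardinal :=
  ⨆ B : {B : Set α // M.IsBase B}, Cardinal.mk B.1

lemma mdelete_eq_delete (M : Matroid α) (A : Set α) : mdelete M A = M ＼ A := rfl

lemma mcontract_eq_contract (N : Matroid α) (A : Set α) : mcontract N A = N ／ A := rfl

lemma mdot_eq_contract (N : Matroid α) (X : Set α) : mdot N X = N ／ (N.E \ X) := rfl

lemma mdot_contract_closure_delete {M N : Matroid α} {A H : Set α}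
    (hHA : Disjoint H A) :
    mdot (N ／ A) ((M ＼ A).closure H) = mdot N (M.closure H) ／ A := by
  rw [mdot_eq_contract, mdot_eq_contract, contract_contract, contract_contract,
    delete_closure_eq, hHA.sdiff_eq_left, contract_ground, ← contract_inter_ground_eq,
    ← contract_inter_ground_eq (C := N.E \ M.closure H ∪ A)]
  congr 1
  ext x
  simp only [mem_inter_iff, mem_union, mem_sdiff]
  tauto

lemma Matroid.Spanning.contract_of_disjoint {P : Matroid α} {A H : Set α}
    (hH : P.Spanning H) (hHA : Disjoint H A) : (P ／ A).Spanning H := by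
  simpa [hHA.sdiff_eq_left] using hH.contract A

theorem stmt8_general (M N : Matroid α) (A : Set α)
    (H : Set α) (h : Hindrance (mdelete M A) (mcontract N A) H) :
    Hindrance M N H := by
  rw [mdelete_eq_delete, mcontract_eq_contract] at h
  obtain ⟨hI, hS⟩ := h
  have hHA : Disjoint H A := (subset_sdiff.mp (hI.subset_ground.trans sdiff_subset)).2
  rw [mdot_contract_closure_delete hHA] at hI hS
  exact ⟨hI.of_contract, fun hsp => hS (hsp.contract_of_disjoint hHA)⟩

/-- Every `(M \ A, N / A)`-hindrance is an `(M,N)`-hindrance. -/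
theorem stmt8 (M N : Matroid α) (hE : M.E = N.E) (A : Set α) (hA : A ⊆ M.E)
    (H : Set α) (h : Hindrance (mdelete M A) (mcontract N A) H) :
    Hindrance M N H :=
  stmt8_general M N A H h
end
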